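/- Let $D_n = \hat{M}_n - M_n$ in the Bernoulli product model, $n\geq 2$. For all $0 < \lambda < n-1$, $\log\mathbb{E}\, e^{-\lambda(D_n - \mathbb{E} D_n)} \leq \frac{v_n^- \lambda^2}{2(1-\lambda/(n-1))}$ where $v_n^- = \frac{4}{(n-1)^2}\sum_{j\geq 1}(1-e^{-np_j})$. -/

import Mathlib

/-!
Put `Z_j = p_j 𝟙{X_j = 0} - 𝟙{X_j = 1} / n`, so that `M_n - \hat M_n = ∑ j, Z_j` almost surely
(Borel–Cantelli: only finitely many `X_j` equal `1`). The `Z_j` are independent and `Z_j ≤ p_j`,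
so by dominated convergence the Laplace transform of `λ ∑ j, Z_j` is the product of those of
the `Z_j`. Each `Z_j` takes three values; with `q₀ = (1 - p)^n`, `q₁ = n p (1 - p)^(n-1)` and
`φ u = eᵘ - 1 - u`, its Laplace transform is `1 + λ 𝔼 Z_j + R ≤ exp (λ 𝔼 Z_j + R)`, where
`R = q₀ φ(λ p) + q₁ φ(-λ/n)`. Termwise comparison of exponential series gives
`φ(s u) ≤ s² φ(u)` for `0 ≤ s ≤ 1` and `u ≥ 0`, whence `q₀ φ(λ p) ≤ (λ/n)² (1 - e^{-np})`
using `(1 - p)^n ≤ e^{-np}`; and `φ(x) ≤ x²` for `|x| ≤ 1` with `(n-1) p (1-p)^(n-1) ≤ 1 - e^{-np}`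
gives `q₁ φ(-λ/n) ≤ λ² (1 - e^{-np}) / (n (n-1))`. So `R ≤ 2 λ² (1 - e^{-np}) / (n-1)²`.
-/

open MeasureTheory ProbabilityTheory Real Filter Topology
open scoped Nat

lemma one_sub_exp_neg_mul_nonneg {a x : ℝ} (ha : 0 ≤ a) (hx : 0 ≤ x) : 0 ≤ 1 - exp (-a * x) := by
  rw [sub_nonneg, exp_le_one_iff, neg_mul]
  exact neg_nonpos.2 (mul_nonneg ha hx)

lemma summable_one_sub_exp_neg_mul {p : ℕ → ℝ} (hp0 : ∀ j, 0 ≤ p j) (hp : Summable p)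
    {a : ℝ} (ha : 0 ≤ a) : Summable fun j => 1 - exp (-a * p j) :=
  (hp.mul_left a).of_nonneg_of_le (fun j => one_sub_exp_neg_mul_nonneg ha (hp0 j)) fun j => by
    linarith [add_one_le_exp (-a * p j)]

lemma exp_mul_sub_one_sub_mul_le {x t : ℝ} (hx : 0 ≤ x) (ht0 : 0 ≤ t) (ht1 : t ≤ 1) :
    exp (t * x) - 1 - t * x ≤ t ^ 2 * (exp x - 1 - x) := by
  have tail (y : ℝ) : HasSum (fun k : ℕ => y ^ (k + 2) / (k + 2)!) (exp y - 1 - y) := by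
    have h := (hasSum_nat_add_iff' 2).2 (NormedSpace.expSeries_div_hasSum_exp y)
    rw [← Real.exp_eq_exp_ℝ] at h
    simpa [Finset.sum_range_succ, sub_sub] using h
  refine hasSum_le (fun k => ?_) (tail (t * x)) ((tail x).mul_left (t ^ 2))
  rw [mul_pow, mul_div_assoc]
  exact mul_le_mul_of_nonneg_right (pow_le_pow_of_le_one ht0 ht1 (by omega)) (by positivity)

lemma one_sub_pow_le_exp_neg_mul {p : ℝ} (hp : p ≤ 1) (k : ℕ) :
    (1 - p) ^ k ≤ exp (-k * p) := by
  calc (1 - p) ^ k ≤ exp (-p) ^ k := pow_le_pow_left₀ (by linarith) (one_sub_le_exp_neg p) k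
    _ = exp (-k * p) := by rw [← exp_nat_mul]; ring_nf

lemma mul_exp_neg_le_one_sub_exp_neg (x : ℝ) : x * exp (-x) ≤ 1 - exp (-x) := by
  have h : (x + 1) * exp (-x) ≤ exp x * exp (-x) :=
    mul_le_mul_of_nonneg_right (add_one_le_exp x) (exp_pos _).le
  rw [← exp_add, add_neg_cancel, exp_zero] at h
  linarith

lemma natCast_mul_mul_one_sub_pow_le {p : ℝ} (hp0 : 0 ≤ p) (hp1 : p ≤ 1) (k : ℕ) :
    k * p * (1 - p) ^ k ≤ 1 - exp (-(k + 1) * p) := by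
  have hexp : exp (-(k + 1) * p) ≤ exp (-(k * p)) := exp_le_exp.2 (by nlinarith)
  calc k * p * (1 - p) ^ k ≤ k * p * exp (-(k * p)) := by
        rw [← neg_mul]
        exact mul_le_mul_of_nonneg_left (one_sub_pow_le_exp_neg_mul hp1 k) (by positivity)
    _ ≤ 1 - exp (-(k * p)) := mul_exp_neg_le_one_sub_exp_neg _
    _ ≤ 1 - exp (-(k + 1) * p) := by linarith

section ThreePoint

variable {p t : ℝ} {n : ℕ}

lemma one_sub_pow_mul_exp_sub_one_sub_le (hp0 : 0 ≤ p) (hp1 : p ≤ 1) (hn : 0 < n) (ht0 : 0 ≤ t)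
    (htn : t ≤ n) :
    (1 - p) ^ n * (exp (t * p) - 1 - t * p) ≤ (t / n) ^ 2 * (1 - exp (-n * p)) := by
  have hn' : (0 : ℝ) < n := by exact_mod_cast hn
  have key := exp_mul_sub_one_sub_mul_le (by positivity : 0 ≤ n * p) (by positivity)
    (div_le_one_of_le₀ htn hn'.le)
  rw [show t / n * (n * p) = t * p by field_simp] at key
  have hinv : exp (-n * p) * exp (n * p) = 1 := by rw [← exp_add]; simp
  calc (1 - p) ^ n * (exp (t * p) - 1 - t * p)
      ≤ exp (-n * p) * ((t / n) ^ 2 * (exp (n * p) - 1 - n * p)) :=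
        mul_le_mul (one_sub_pow_le_exp_neg_mul hp1 n) key
          (by linarith [add_one_le_exp (t * p)]) (exp_pos _).le
    _ = (t / n) ^ 2 * (1 - exp (-n * p) - n * p * exp (-n * p)) := by
        linear_combination (t / n) ^ 2 * hinv
    _ ≤ (t / n) ^ 2 * (1 - exp (-n * p)) := by
        refine mul_le_mul_of_nonneg_left ?_ (sq_nonneg _)
        linarith [mul_nonneg (by positivity : (0 : ℝ) ≤ n * p) (exp_pos (-n * p)).le]

lemma natCast_mul_one_sub_pow_mul_exp_neg_sub_one_add_le (hp0 : 0 ≤ p) (hp1 : p ≤ 1)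
    (hn : 2 ≤ n) (ht0 : 0 ≤ t) (htn : t ≤ n) :
    n * p * (1 - p) ^ (n - 1) * (exp (-t / n) - 1 + t / n)
      ≤ t ^ 2 / (n * (n - 1)) * (1 - exp (-n * p)) := by
  obtain ⟨k, rfl⟩ : ∃ k, n = k + 1 := ⟨n - 1, by omega⟩
  have hk : (1 : ℝ) ≤ k := by exact_mod_cast (by omega : 1 ≤ k)
  push_cast at htn ⊢
  rw [add_sub_cancel_right]
  have hquad : exp (-t / (k + 1)) - 1 + t / (k + 1) ≤ (t / (k + 1)) ^ 2 := by
    have h := abs_exp_sub_one_sub_id_le (x := -t / (k + 1)) (by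
      rw [abs_div, abs_neg, abs_of_nonneg ht0, abs_of_pos (by positivity)]
      exact div_le_one_of_le₀ htn (by positivity))
    rw [neg_div, neg_sq, sub_neg_eq_add] at h
    rw [neg_div]
    exact (le_abs_self _).trans h
  calc (k + 1) * p * (1 - p) ^ k * (exp (-t / (k + 1)) - 1 + t / (k + 1))
      ≤ (k + 1) * p * (1 - p) ^ k * (t / (k + 1)) ^ 2 :=
        mul_le_mul_of_nonneg_left hquad
          (by have := pow_nonneg (by linarith : 0 ≤ 1 - p) k; positivity)
    _ = t ^ 2 / ((k + 1) * k) * (k * p * (1 - p) ^ k) := by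
        field_simp
    _ ≤ t ^ 2 / ((k + 1) * k) * (1 - exp (-(k + 1) * p)) :=
        mul_le_mul_of_nonneg_left (natCast_mul_mul_one_sub_pow_le hp0 hp1 k) (by positivity)

lemma three_point_mgf_le_exp (hp0 : 0 ≤ p) (hp1 : p ≤ 1) (hn : 2 ≤ n) (ht0 : 0 ≤ t)
    (htn : t ≤ n) :
    1 + (1 - p) ^ n * (exp (t * p) - 1) + n * p * (1 - p) ^ (n - 1) * (exp (-t / n) - 1)
      ≤ exp (t * ((1 - p) ^ n * p - n * p * (1 - p) ^ (n - 1) / n)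
          + 2 * t ^ 2 / (n - 1) ^ 2 * (1 - exp (-n * p))) := by
  have hn1 : (1 : ℝ) < n := by exact_mod_cast hn
  have hA := one_sub_pow_mul_exp_sub_one_sub_le hp0 hp1 (by omega) ht0 htn
  have hB := natCast_mul_one_sub_pow_mul_exp_neg_sub_one_add_le hp0 hp1 hn ht0 htn
  have hcoef : (t / n) ^ 2 + t ^ 2 / (n * (n - 1)) ≤ 2 * t ^ 2 / (n - 1) ^ 2 := by
    have h1 : t ^ 2 / n ^ 2 ≤ t ^ 2 / (n - 1) ^ 2 :=
      div_le_div_of_nonneg_left (sq_nonneg t) (by nlinarith) (by nlinarith)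
    have h2 : t ^ 2 / (n * (n - 1)) ≤ t ^ 2 / (n - 1) ^ 2 :=
      div_le_div_of_nonneg_left (sq_nonneg t) (by nlinarith) (by nlinarith)
    rw [div_pow, mul_div_assoc]
    linarith
  have hg := one_sub_exp_neg_mul_nonneg n.cast_nonneg hp0
  calc 1 + (1 - p) ^ n * (exp (t * p) - 1) + n * p * (1 - p) ^ (n - 1) * (exp (-t / n) - 1)
      = t * ((1 - p) ^ n * p - n * p * (1 - p) ^ (n - 1) / n)
          + ((1 - p) ^ n * (exp (t * p) - 1 - t * p)
            + n * p * (1 - p) ^ (n - 1) * (exp (-t / n) - 1 + t / n)) + 1 := by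
        field_simp
        ring
    _ ≤ t * ((1 - p) ^ n * p - n * p * (1 - p) ^ (n - 1) / n)
          + 2 * t ^ 2 / (n - 1) ^ 2 * (1 - exp (-n * p)) + 1 := by
        nlinarith [mul_le_mul_of_nonneg_right hcoef hg]
    _ ≤ _ := add_one_le_exp _

end ThreePoint

section SeriesOfIndependent

variable {Ω : Type*} [MeasurableSpace Ω] {μ : Measure Ω} [IsProbabilityMeasure μ]
  {Z : ℕ → Ω → ℝ} {S : Ω → ℝ} {b : ℕ → ℝ} {t : ℝ}

lemma integrable_exp_mul_of_hasSum (hZ : ∀ j, Measurable (Z j))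
    (hS : ∀ᵐ ω ∂μ, HasSum (Z · ω) (S ω)) (hb : Summable b) (hZb : ∀ j ω, Z j ω ≤ b j)
    (ht : 0 ≤ t) :
    Integrable (fun ω => exp (t * S ω)) μ := by
  refine .of_bound (C := exp (t * ∑' j, b j)) ?_ ?_
  · refine aestronglyMeasurable_of_tendsto_ae atTop
      (f := fun N ω => exp (t * ∑ j ∈ Finset.range N, Z j ω)) (fun N => ?_) ?_
    · fun_prop
    · filter_upwards [hS] with ω hω
      exact (continuous_exp.tendsto _).comp (hω.tendsto_sum_nat.const_mul t)
  · filter_upwards [hS] with ω hω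
    rw [norm_eq_abs, abs_exp]
    exact exp_le_exp.2 (mul_le_mul_of_nonneg_left (hasSum_le (hZb · ω) hω hb.hasSum) ht)

lemma integral_exp_mul_le_of_hasSum (hZ : ∀ j, Measurable (Z j)) (hind : iIndepFun Z μ)
    (hS : ∀ᵐ ω ∂μ, HasSum (Z · ω) (S ω)) (hb0 : ∀ j, 0 ≤ b j) (hb : Summable b)
    (hZb : ∀ j ω, Z j ω ≤ b j) (ht : 0 ≤ t) {d : ℕ → ℝ} (hd : Summable d)
    (hmgf : ∀ j, ∫ ω, exp (t * Z j ω) ∂μ ≤ exp (d j)) :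
    ∫ ω, exp (t * S ω) ∂μ ≤ exp (∑' j, d j) := by
  have partial_le (N : ℕ) :
      ∫ ω, exp (t * ∑ j ∈ Finset.range N, Z j ω) ∂μ ≤ exp (∑ j ∈ Finset.range N, d j) := by
    have h := hind.mgf_sum hZ (Finset.range N) (t := t)
    simp only [mgf, Finset.sum_apply] at h
    rw [h, exp_sum]
    exact Finset.prod_le_prod (fun j _ => integral_nonneg fun ω => (exp_pos _).le)
      fun j _ => hmgf j
  have partial_bound (N : ℕ) (ω : Ω) : ∑ j ∈ Finset.range N, Z j ω ≤ ∑' j, b j :=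
    (Finset.sum_le_sum fun j _ => hZb j ω).trans (hb.sum_le_tsum _ fun j _ => hb0 j)
  refine le_of_tendsto_of_tendsto' ?_
    ((continuous_exp.tendsto _).comp hd.hasSum.tendsto_sum_nat) partial_le
  refine tendsto_integral_of_dominated_convergence (fun _ => exp (t * ∑' j, b j))
    (fun N => by fun_prop) (integrable_const _) (fun N => .of_forall fun ω => ?_) ?_
  · rw [norm_eq_abs, abs_exp]
    exact exp_le_exp.2 (mul_le_mul_of_nonneg_left (partial_bound N ω) ht)
  · filter_upwards [hS] with ω hω
    exact (continuous_exp.tendsto _).comp (hω.tendsto_sum_nat.const_mul t)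

theorem log_integral_exp_mul_sub_integral_le (hZ : ∀ j, Measurable (Z j))
    (hind : iIndepFun Z μ) (hS : ∀ᵐ ω ∂μ, HasSum (Z · ω) (S ω))
    (hZint : ∀ j, Integrable (Z j) μ) (hZsum : Summable fun j => ∫ ω, ‖Z j ω‖ ∂μ)
    (hb0 : ∀ j, 0 ≤ b j) (hb : Summable b) (hZb : ∀ j ω, Z j ω ≤ b j) (ht : 0 ≤ t)
    {c : ℕ → ℝ} (hc : Summable c)
    (hmgf : ∀ j, ∫ ω, exp (t * Z j ω) ∂μ ≤ exp (t * ∫ ω, Z j ω ∂μ + c j)) :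
    log (∫ ω, exp (t * (S ω - ∫ ω', S ω' ∂μ)) ∂μ) ≤ ∑' j, c j := by
  have hES : ∫ ω, S ω ∂μ = ∑' j, ∫ ω, Z j ω ∂μ :=
    (integral_congr_ae (hS.mono fun ω h => h.tsum_eq.symm)).trans
      (integral_tsum_of_summable_integral_norm hZint hZsum).symm
  have hEZ : Summable fun j => ∫ ω, Z j ω ∂μ :=
    hZsum.of_norm_bounded fun j => norm_integral_le_integral_norm _
  have hsplit (ω : Ω) : exp (t * (S ω - ∫ ω', S ω' ∂μ))
      = exp (t * S ω) * exp (-(t * ∫ ω', S ω' ∂μ)) := by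
    rw [← exp_add]; ring_nf
  have hint := integrable_exp_mul_of_hasSum hZ hS hb hZb ht
  simp_rw [hsplit]
  rw [integral_mul_const, log_le_iff_le_exp (mul_pos (integral_exp_pos hint) (exp_pos _))]
  calc (∫ ω, exp (t * S ω) ∂μ) * exp (-(t * ∫ ω', S ω' ∂μ))
      ≤ exp (∑' j, (t * ∫ ω, Z j ω ∂μ + c j)) * exp (-(t * ∫ ω', S ω' ∂μ)) :=
        mul_le_mul_of_nonneg_right
          (integral_exp_mul_le_of_hasSum hZ hind hS hb0 hb hZb ht ((hEZ.mul_left t).add hc) hmgf)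
          (exp_pos _).le
    _ = exp (∑' j, c j) := by
        rw [← exp_add, (hEZ.mul_left t).tsum_add hc, tsum_mul_left, hES]
        ring_nf

end SeriesOfIndependent

/-- `missingMassTerm p_j n X_{n,j}` is the `j`-th summand of `M_n - \hat M_n`. -/
noncomputable def missingMassTerm (p : ℝ) (n k : ℕ) : ℝ :=
  if k = 0 then p else if k = 1 then -1 / n else 0

lemma missingMassTerm_le {p : ℝ} (hp : 0 ≤ p) (n k : ℕ) : missingMassTerm p n k ≤ p := by
  unfold missingMassTerm
  split_ifs
  · exact le_rfl
  · exact (div_nonpos_of_nonpos_of_nonneg (by norm_num) n.cast_nonneg).trans hp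
  · exact hp

lemma abs_missingMassTerm_le {p : ℝ} (hp0 : 0 ≤ p) (hp1 : p ≤ 1) (n k : ℕ) :
    |missingMassTerm p n k| ≤ 1 := by
  unfold missingMassTerm
  split_ifs
  · rwa [abs_of_nonneg hp0]
  · rw [abs_div, abs_neg, abs_one, Nat.abs_cast, one_div]
    exact Nat.cast_inv_le_one n
  · simp

lemma ae_hasSum_missingMassTerm {Ω : Type*} [MeasurableSpace Ω] {μ : Measure Ω}
    {X : ℕ → Ω → ℕ} {p : ℕ → ℝ} (hp0 : ∀ j, 0 ≤ p j) (hp : Summable p)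
    (h1 : ∑' j, μ {ω | X j ω = 1} ≠ ⊤) (n : ℕ) :
    ∀ᵐ ω ∂μ, HasSum (fun j => missingMassTerm (p j) n (X j ω))
      ((∑' j, if X j ω = 0 then p j else 0) - (∑' j, if X j ω = 1 then (1 : ℝ) else 0) / n) := by
  filter_upwards [ae_eventually_notMem h1] with ω hω
  obtain ⟨N, hN⟩ := eventually_atTop.1 hω
  have hone : Summable fun j => if X j ω = 1 then (1 : ℝ) else 0 := by
    refine summable_of_hasFiniteSupport ((Finset.range N).finite_toSet.subset fun j hj => ?_)
    by_contra hjN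
    exact hj (if_neg (hN j (by simpa using hjN)))
  have hzero : Summable fun j => if X j ω = 0 then p j else 0 :=
    hp.of_nonneg_of_le (fun j => by split_ifs <;> simp [hp0 j]) fun j => by
      split_ifs <;> simp [hp0 j]
  have hterm : (fun j => missingMassTerm (p j) n (X j ω)) = fun j =>
      (if X j ω = 0 then p j else 0) - (if X j ω = 1 then (1 : ℝ) else 0) / n := by
    funext j
    unfold missingMassTerm
    by_cases h0 : X j ω = 0 <;> by_cases h1 : X j ω = 1 <;> simp_all [neg_div]
  rw [hterm]
  exact hzero.hasSum.sub (hone.hasSum.div_const _)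

def HasBinomialLaw {Ω : Type*} [MeasurableSpace Ω] (μ : Measure Ω) (X : Ω → ℕ) (n : ℕ) (p : ℝ) :
    Prop :=
  ∀ k, μ {ω | X ω = k} = ENNReal.ofReal ((n.choose k : ℝ) * p ^ k * (1 - p) ^ (n - k))

lemma natCast_mul_mul_one_sub_pow_pred_le {p : ℝ} {n : ℕ} (hp0 : 0 ≤ p) (hp1 : p ≤ 1) :
    n * p * (1 - p) ^ (n - 1) ≤ n * p :=
  mul_le_of_le_one_right (mul_nonneg n.cast_nonneg hp0)
    (pow_le_one₀ (sub_nonneg.2 hp1) (by linarith))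

section OneCoordinate

variable {Ω : Type*} [MeasurableSpace Ω] {μ : Measure Ω} {X : Ω → ℕ} {p : ℝ} {n : ℕ}

lemma measureReal_eq_zero_of_hasBinomialLaw (hp1 : p ≤ 1) (hbin : HasBinomialLaw μ X n p) :
    μ.real {ω | X ω = 0} = (1 - p) ^ n := by
  rw [measureReal_def, hbin 0]
  simpa using ENNReal.toReal_ofReal (pow_nonneg (sub_nonneg.2 hp1) n)

lemma measureReal_eq_one_of_hasBinomialLaw (hp0 : 0 ≤ p) (hp1 : p ≤ 1)
    (hbin : HasBinomialLaw μ X n p) :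
    μ.real {ω | X ω = 1} = n * p * (1 - p) ^ (n - 1) := by
  rw [measureReal_def, hbin 1]
  simpa using ENNReal.toReal_ofReal
    (mul_nonneg (mul_nonneg n.cast_nonneg hp0) (pow_nonneg (sub_nonneg.2 hp1) (n - 1)))

lemma measure_eq_one_le_of_hasBinomialLaw (hp0 : 0 ≤ p) (hp1 : p ≤ 1)
    (hbin : HasBinomialLaw μ X n p) :
    μ {ω | X ω = 1} ≤ ENNReal.ofReal (n * p) := by
  rw [hbin 1]
  refine ENNReal.ofReal_le_ofReal ?_
  simpa using natCast_mul_mul_one_sub_pow_pred_le hp0 hp1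

variable [IsProbabilityMeasure μ]

lemma integral_ite_eq_zero_ite_eq_one (hX : Measurable X) (a b c : ℝ) :
    ∫ ω, (if X ω = 0 then a else if X ω = 1 then b else c) ∂μ
      = c + μ.real {ω | X ω = 0} * (a - c) + μ.real {ω | X ω = 1} * (b - c) := by
  have hs (k : ℕ) : MeasurableSet {ω | X ω = k} := hX (measurableSet_singleton k)
  have hi (k : ℕ) (e : ℝ) : Integrable ({ω | X ω = k}.indicator fun _ => e) μ :=
    (integrable_const e).indicator (hs k)
  have hpt : (fun ω => if X ω = 0 then a else if X ω = 1 then b else c) = fun ω =>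
      c + ({ω | X ω = 0}.indicator (fun _ => a - c) ω
        + {ω | X ω = 1}.indicator (fun _ => b - c) ω) := by
    funext ω
    by_cases h0 : X ω = 0 <;> by_cases h1 : X ω = 1 <;> simp_all [Set.indicator]
  rw [hpt, integral_add (integrable_const c) (by exact (hi 0 (a - c)).add (hi 1 (b - c))),
    integral_add (hi 0 _) (hi 1 _), integral_const, integral_indicator_const _ (hs 0),
    integral_indicator_const _ (hs 1)]
  simp only [probReal_univ, smul_eq_mul, one_mul]
  ring

lemma integral_missingMassTerm (hX : Measurable X) (p : ℝ) (n : ℕ) :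
    ∫ ω, missingMassTerm p n (X ω) ∂μ = μ.real {ω | X ω = 0} * p - μ.real {ω | X ω = 1} / n := by
  simp only [missingMassTerm]
  rw [integral_ite_eq_zero_ite_eq_one hX]
  ring

lemma integral_abs_missingMassTerm (hX : Measurable X) (p : ℝ) (n : ℕ) :
    ∫ ω, |missingMassTerm p n (X ω)| ∂μ
      = μ.real {ω | X ω = 0} * |p| + μ.real {ω | X ω = 1} / n := by
  simp only [missingMassTerm, apply_ite (abs : ℝ → ℝ)]
  rw [integral_ite_eq_zero_ite_eq_one hX, abs_div, abs_neg, abs_one, Nat.abs_cast, abs_zero]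
  ring

lemma integral_exp_mul_missingMassTerm (hX : Measurable X) (p t : ℝ) (n : ℕ) :
    ∫ ω, exp (t * missingMassTerm p n (X ω)) ∂μ
      = 1 + μ.real {ω | X ω = 0} * (exp (t * p) - 1)
        + μ.real {ω | X ω = 1} * (exp (-t / n) - 1) := by
  simp only [missingMassTerm, mul_ite, apply_ite exp, mul_zero, exp_zero]
  rw [integral_ite_eq_zero_ite_eq_one hX, mul_div_assoc', mul_neg_one]

lemma integral_abs_missingMassTerm_le (hX : Measurable X) (hp0 : 0 ≤ p) (hp1 : p ≤ 1)
    (hbin : HasBinomialLaw μ X n p) :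
    ∫ ω, |missingMassTerm p n (X ω)| ∂μ ≤ 2 * p := by
  rw [integral_abs_missingMassTerm hX, measureReal_eq_zero_of_hasBinomialLaw hp1 hbin,
    measureReal_eq_one_of_hasBinomialLaw hp0 hp1 hbin, abs_of_nonneg hp0]
  have h0 : (1 - p) ^ n * p ≤ p :=
    mul_le_of_le_one_left hp0 (pow_le_one₀ (sub_nonneg.2 hp1) (by linarith))
  have h1 : n * p * (1 - p) ^ (n - 1) / n ≤ p := by
    rcases n.eq_zero_or_pos with rfl | hn
    · simpa using hp0
    · rw [div_le_iff₀ (by positivity)]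
      linarith [natCast_mul_mul_one_sub_pow_pred_le (n := n) hp0 hp1]
  linarith

lemma integral_exp_mul_missingMassTerm_le (hX : Measurable X) {t : ℝ} (hp0 : 0 ≤ p)
    (hp1 : p ≤ 1) (hbin : HasBinomialLaw μ X n p) (hn : 2 ≤ n) (ht0 : 0 ≤ t) (htn : t ≤ n) :
    ∫ ω, exp (t * missingMassTerm p n (X ω)) ∂μ
      ≤ exp (t * ∫ ω, missingMassTerm p n (X ω) ∂μ
        + 2 * t ^ 2 / (n - 1) ^ 2 * (1 - exp (-n * p))) := by
  rw [integral_exp_mul_missingMassTerm hX, integral_missingMassTerm hX,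
    measureReal_eq_zero_of_hasBinomialLaw hp1 hbin,
    measureReal_eq_one_of_hasBinomialLaw hp0 hp1 hbin]
  exact three_point_mgf_le_exp hp0 hp1 hn ht0 htn

end OneCoordinate

lemma mul_le_div_two_mul_one_sub_div {m t v : ℝ} (hv : 0 ≤ v) (ht0 : 0 ≤ t) (htm : t < m - 1) :
    2 * t ^ 2 / (m - 1) ^ 2 * v ≤ 4 / (m - 1) ^ 2 * v * t ^ 2 / (2 * (1 - t / (m - 1))) := by
  have hm : 0 < m - 1 := by linarith
  have hd : 0 < 1 - t / (m - 1) := by rwa [sub_pos, div_lt_one hm]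
  rw [show 4 / (m - 1) ^ 2 * v * t ^ 2 / (2 * (1 - t / (m - 1)))
      = 2 * t ^ 2 / (m - 1) ^ 2 * v / (1 - t / (m - 1)) by field_simp; ring]
  exact le_div_self (by positivity) hd (by linarith [div_nonneg ht0 hm.le])

theorem stmt_general
    {Ω : Type*} [MeasurableSpace Ω] (μ : Measure Ω) [IsProbabilityMeasure μ]
    (p : ℕ → ℝ) (hp : ∀ j, p j ∈ Set.Ioo (0 : ℝ) 1) (hsum : Summable p)
    (n : ℕ) (X : ℕ → Ω → ℕ)
    (hmeas : ∀ j, Measurable (X j))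
    (hindep : iIndepFun X μ)
    (hbin : ∀ j k, μ {ω | X j ω = k} =
      ENNReal.ofReal ((n.choose k : ℝ) * p j ^ k * (1 - p j) ^ (n - k))) :
    ∀ lam : ℝ, 0 < lam → lam < (n : ℝ) - 1 →
      Real.log (∫ ω, Real.exp (-lam *
          (((∑' j, if X j ω = 1 then (1 : ℝ) else 0) / n
              - ∑' j, if X j ω = 0 then p j else 0)
            - ∫ ω', ((∑' j, if X j ω' = 1 then (1 : ℝ) else 0) / n
              - ∑' j, if X j ω' = 0 then p j else 0) ∂μ)) ∂μ)
        ≤ ((4 / ((n : ℝ) - 1) ^ 2) * ∑' j, (1 - Real.exp (-(n : ℝ) * p j)))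
          * lam ^ 2 / (2 * (1 - lam / ((n : ℝ) - 1))) := by
  intro lam hl0 hl1
  have hn : 2 ≤ n := by exact_mod_cast (by linarith : (1 : ℝ) < n)
  have hp0 j : 0 ≤ p j := (hp j).1.le
  have hp1 j : p j ≤ 1 := (hp j).2.le
  have hZ j : Measurable fun ω => missingMassTerm (p j) n (X j ω) :=
    (Measurable.of_discrete (f := missingMassTerm (p j) n)).comp (hmeas j)
  have hZint j : Integrable (fun ω => missingMassTerm (p j) n (X j ω)) μ :=
    .of_bound (hZ j).aestronglyMeasurable 1
      (.of_forall fun _ => abs_missingMassTerm_le (hp0 j) (hp1 j) n _)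
  have hZsum : Summable fun j => ∫ ω, ‖missingMassTerm (p j) n (X j ω)‖ ∂μ :=
    (hsum.mul_left 2).of_nonneg_of_le (fun j => integral_nonneg fun _ => norm_nonneg _)
      fun j => integral_abs_missingMassTerm_le (hmeas j) (hp0 j) (hp1 j) (hbin j)
  have hones : ∑' j, μ {ω | X j ω = 1} ≠ ⊤ := by
    refine ne_top_of_le_ne_top (ENNReal.ofReal_ne_top (r := ∑' j, n * p j)) ?_
    rw [ENNReal.ofReal_tsum_of_nonneg (fun j => mul_nonneg n.cast_nonneg (hp0 j))
      (hsum.mul_left (n : ℝ))]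
    exact ENNReal.tsum_le_tsum fun j => measure_eq_one_le_of_hasBinomialLaw (hp0 j) (hp1 j) (hbin j)
  have hlog := log_integral_exp_mul_sub_integral_le hZ
    (hindep.comp (fun j => missingMassTerm (p j) n) fun _ => .of_discrete)
    (ae_hasSum_missingMassTerm hp0 hsum hones n) hZint hZsum hp0 hsum
    (fun j _ => missingMassTerm_le (hp0 j) n _) hl0.le
    ((summable_one_sub_exp_neg_mul hp0 hsum n.cast_nonneg).mul_left _) fun j =>
      integral_exp_mul_missingMassTerm_le (hmeas j) (hp0 j) (hp1 j) (hbin j) hn hl0.le (by linarith)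
  calc _ = _ := by
        simp only [← neg_sub (∑' j, if X j _ = 0 then p j else 0), integral_neg]
        exact congrArg log (integral_congr_ae (.of_forall fun ω => congrArg exp (by ring)))
    _ ≤ _ := hlog
    _ = 2 * lam ^ 2 / (n - 1) ^ 2 * ∑' j, (1 - exp (-n * p j)) := tsum_mul_left
    _ ≤ _ := mul_le_div_two_mul_one_sub_div
        (tsum_nonneg fun j => one_sub_exp_neg_mul_nonneg n.cast_nonneg (hp0 j)) hl0.le hl1

theorem stmt
    {Ω : Type*} [MeasurableSpace Ω] (μ : Measure Ω) [IsProbabilityMeasure μ]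
    (p : ℕ → ℝ) (hp : ∀ j, p j ∈ Set.Ioo (0 : ℝ) 1) (hsum : Summable p)
    (n : ℕ) (X : ℕ → Ω → ℕ)
    (hmeas : ∀ j, Measurable (X j))
    (hindep : iIndepFun X μ)
    (hbin : ∀ j k, μ {ω | X j ω = k} =
      ENNReal.ofReal ((n.choose k : ℝ) * p j ^ k * (1 - p j) ^ (n - k)))
    (hn : 2 ≤ n) :
    ∀ lam : ℝ, 0 < lam → lam < (n : ℝ) - 1 →
      Real.log (∫ ω, Real.exp (-lam *
          (((∑' j, if X j ω = 1 then (1 : ℝ) else 0) / n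
              - ∑' j, if X j ω = 0 then p j else 0)
            - ∫ ω', ((∑' j, if X j ω' = 1 then (1 : ℝ) else 0) / n
              - ∑' j, if X j ω' = 0 then p j else 0) ∂μ)) ∂μ)
        ≤ ((4 / ((n : ℝ) - 1) ^ 2) * ∑' j, (1 - Real.exp (-(n : ℝ) * p j)))
          * lam ^ 2 / (2 * (1 - lam / ((n : ℝ) - 1))) :=
  stmt_general μ p hp hsum n X hmeas hindep hbin
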